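/- (Fermat's descent result) There are no positive integers x, y, z with y² = x⁴ − z⁴. -/

import Mathlib

/-!
A solution of `y² = x⁴ - z⁴` may be taken with `x` and `z` coprime, and then `(z², y, x²)` is a
primitive Pythagorean triple, with `x² = m² + n²`. If `z² = m² - n²`, then `(m, xz, n)` is a
smaller solution. If `z² = 2mn`, then `(m, n, x)` is again a primitive triple, `x = r² + s²`, and
`z² = 4rs(r² - s²)` with pairwise coprime factors forces `r = a²`, `s = b²`, `r² - s² = c²`, so
`(a, c, b)` is a smaller solution.
-/

theorem Int.exists_sq_of_isCoprime_of_mul_eq_sq {a b c : ℤ} (hab : IsCoprime a b)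
    (h : a * b = c ^ 2) (ha : 0 < a) : ∃ d, 0 < d ∧ a = d ^ 2 := by
  obtain ⟨d, hd | hd⟩ := Int.sq_of_isCoprime hab h
  · refine ⟨|d|, abs_pos.2 ?_, by rw [sq_abs, hd]⟩
    rintro rfl
    simp [hd] at ha
  · nlinarith [sq_nonneg d]

theorem IsCoprime.mul_sq_sub_sq {R : Type*} [CommRing R] {r s : R} (h : IsCoprime r s) :
    IsCoprime (r * s) (r ^ 2 - s ^ 2) := by
  refine IsCoprime.mul_left ?_ ?_
  · convert (h.pow_right (n := 2)).neg_right.add_mul_left_right r using 1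
    ring
  · convert (h.symm.pow_right (n := 2)).add_mul_left_right (-s) using 1
    ring

theorem PythagoreanTriple.exists_pos_classification {a b c : ℤ} (h : PythagoreanTriple a b c)
    (hab : IsCoprime a b) (ha : 0 < a) (hb : 0 < b) (hc : 0 < c) :
    ∃ m n, 0 < m ∧ 0 < n ∧ IsCoprime m n ∧ c = m ^ 2 + n ^ 2 ∧
      (a = m ^ 2 - n ^ 2 ∧ b = 2 * m * n ∨ a = 2 * m * n ∧ b = m ^ 2 - n ^ 2) := by
  obtain ⟨m, n, hlegs, hhyp, hmn, -⟩ :=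
    coprime_classification.mp ⟨h, Int.isCoprime_iff_gcd_eq_one.mp hab⟩
  have hc' : c = m ^ 2 + n ^ 2 := hhyp.resolve_right fun hneg ↦ by
    nlinarith [sq_nonneg m, sq_nonneg n]
  have hmn_pos : 0 < m * n := by rcases hlegs with ⟨-, h⟩ | ⟨h, -⟩ <;> linarith
  have habs : |m| * |n| = m * n := by rw [← abs_mul, abs_of_pos hmn_pos]
  refine ⟨|m|, |n|, abs_pos.2 (left_ne_zero_of_mul hmn_pos.ne'),
    abs_pos.2 (right_ne_zero_of_mul hmn_pos.ne'),
    (IsCoprime.abs_abs_iff m n).2 (Int.isCoprime_iff_gcd_eq_one.mpr hmn), ?_⟩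
  simp only [sq_abs, mul_assoc, habs]
  simpa [mul_assoc] using And.intro hc' hlegs

def QuarticDiffSq (x y z : ℤ) : Prop :=
  0 < x ∧ 0 < y ∧ 0 < z ∧ y ^ 2 = x ^ 4 - z ^ 4

namespace QuarticDiffSq

variable {x y z : ℤ}

theorem exists_isCoprime (h : QuarticDiffSq x y z) :
    ∃ x' y' z', QuarticDiffSq x' y' z' ∧ IsCoprime x' z' := by
  obtain ⟨hx, hy, hz, h⟩ := h
  obtain ⟨g, x', z', hg, hco, rfl, rfl⟩ :=
    Int.exists_gcd_one' (Int.gcd_pos_of_ne_zero_left z hx.ne')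
  have hg' : (0 : ℤ) < g := by exact_mod_cast hg
  obtain ⟨y', rfl⟩ : (g : ℤ) ^ 2 ∣ y := by
    rw [← Int.pow_dvd_pow_iff two_ne_zero]
    exact ⟨x' ^ 4 - z' ^ 4, by rw [h]; ring⟩
  refine ⟨x', y', z', ⟨pos_of_mul_pos_left hx hg'.le, pos_of_mul_pos_right hy (by positivity),
    pos_of_mul_pos_left hz hg'.le, ?_⟩, Int.isCoprime_iff_gcd_eq_one.mpr hco⟩
  have hg4 : (g : ℤ) ^ 4 ≠ 0 := by positivity
  apply mul_left_cancel₀ hg4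
  linear_combination h

theorem exists_lt_of_sq_eq_two_mul {m n : ℤ} (hm : 0 < m) (hn : 0 < n) (hmn : IsCoprime m n)
    (hx : 0 < x) (hx2 : x ^ 2 = m ^ 2 + n ^ 2) (hz2 : z ^ 2 = 2 * m * n) :
    ∃ x' y' z', QuarticDiffSq x' y' z' ∧ IsCoprime x' z' ∧ x' < x := by
  have htriple : PythagoreanTriple m n x := by
    unfold PythagoreanTriple; linear_combination -hx2
  obtain ⟨r, s, hr, hs, hrs, hxr, hlegs⟩ := htriple.exists_pos_classification hmn hm hn hx
  have hmn_rs : m * n = 2 * (r * s) * (r ^ 2 - s ^ 2) := by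
    rcases hlegs with ⟨rfl, rfl⟩ | ⟨rfl, rfl⟩ <;> ring
  have hdiff : 0 < r ^ 2 - s ^ 2 := by
    rcases hlegs with ⟨rfl, -⟩ | ⟨-, rfl⟩ <;> assumption
  obtain ⟨w, rfl⟩ : 2 ∣ z := Int.prime_two.dvd_of_dvd_pow (n := 2) ⟨m * n, by linarith⟩
  have hw : r * s * (r ^ 2 - s ^ 2) = w ^ 2 := by linarith
  obtain ⟨d, -, hd⟩ :=
    Int.exists_sq_of_isCoprime_of_mul_eq_sq hrs.mul_sq_sub_sq hw (by positivity)
  obtain ⟨c, hc, hcr⟩ := Int.exists_sq_of_isCoprime_of_mul_eq_sq (c := w) hrs.mul_sq_sub_sq.symm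
    (by linear_combination hw) hdiff
  obtain ⟨a, ha, rfl⟩ := Int.exists_sq_of_isCoprime_of_mul_eq_sq hrs hd hr
  obtain ⟨b, hb, rfl⟩ := Int.exists_sq_of_isCoprime_of_mul_eq_sq (c := d) hrs.symm
    (by linear_combination hd) hs
  refine ⟨a, c, b, ⟨ha, hc, hb, by linear_combination -hcr⟩,
    (IsCoprime.pow_iff two_pos two_pos).mp hrs, ?_⟩
  nlinarith [Int.le_self_sq a, Int.le_self_sq (a ^ 2), pow_pos hb 4]

theorem exists_lt (h : QuarticDiffSq x y z) (hco : IsCoprime x z) :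
    ∃ x' y' z', QuarticDiffSq x' y' z' ∧ IsCoprime x' z' ∧ x' < x := by
  obtain ⟨hx, hy, hz, h⟩ := h
  have htriple : PythagoreanTriple (z ^ 2) y (x ^ 2) := by
    unfold PythagoreanTriple; linear_combination h
  have hco' : IsCoprime (z ^ 2) y := by
    have : IsCoprime (x ^ 4 + (-z ^ 2) * z ^ 2) (z ^ 2) := by
      rw [IsCoprime.add_mul_right_left_iff]; exact hco.pow
    rw [isCoprime_comm, ← IsCoprime.pow_left_iff two_pos]
    convert this using 1; linear_combination h
  obtain ⟨m, n, hm, hn, hmn, hx2, ⟨hz2, -⟩ | ⟨hz2, -⟩⟩ :=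
    htriple.exists_pos_classification hco' (by positivity) hy (by positivity)
  · refine ⟨m, x * z, n, ⟨hm, by positivity, hn, ?_⟩, hmn, ?_⟩
    · linear_combination z ^ 2 * hx2 + (m ^ 2 + n ^ 2) * hz2
    · nlinarith
  · exact exists_lt_of_sq_eq_two_mul hm hn hmn hx hx2 hz2

theorem not_isCoprime {x y z : ℤ} (h : QuarticDiffSq x y z) : ¬ IsCoprime x z := fun hco ↦ by
  obtain ⟨x', y', z', h', hco', hlt⟩ := h.exists_lt hco
  exact h'.not_isCoprime hco'
termination_by x.toNat
decreasing_by have := h'.1; omega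

end QuarticDiffSq

theorem fermat_descent :
    ¬ ∃ x y z : ℤ, 0 < x ∧ 0 < y ∧ 0 < z ∧ y ^ 2 = x ^ 4 - z ^ 4 := by
  rintro ⟨x, y, z, h⟩
  obtain ⟨x', y', z', h', hco⟩ := QuarticDiffSq.exists_isCoprime h
  exact h'.not_isCoprime hco
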